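/- Let C_n = {0,1}^n with Hamming distance d and uniform probability measure μ. For every x ∈ ℝ, sup over all 1-Lipschitz f : C_n → ℝ of μ{u : f(u) - E_μ f ≥ x} equals max over nonempty subsets A ⊆ C_n of μ{u : -d(A,u) + E_μ d(A,·) ≥ x}. -/

import Mathlib

/-!
Every `-d(A, ·)` is 1-Lipschitz, so the right-hand side is at most the left. Conversely, for a
1-Lipschitz `f` let `A = {f - 𝔼 f ≥ x}`. Then `x + 𝔼 f - f ≤ d(A, ·)` everywhere, and integrating
gives `x ≤ 𝔼 d(A, ·)`; hence every point of `A` lies in `{-d(A, ·) + 𝔼 d(A, ·) ≥ x}`.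
-/

open MeasureTheory Metric
open scoped ENNReal

lemma isProbabilityMeasure_inv_card_smul_count {α : Type*} [Fintype α] [Nonempty α]
    [MeasurableSpace α] :
    IsProbabilityMeasure ((Fintype.card α : ℝ≥0∞)⁻¹ • Measure.count : Measure α) := by
  constructor
  rw [Measure.smul_apply, Measure.count_univ, ENat.card_eq_coe_fintype_card,
    ENat.toENNReal_coe, smul_eq_mul]
  exact ENNReal.inv_mul_cancel (by exact_mod_cast Fintype.card_ne_zero) (ENNReal.natCast_ne_top _)

lemma lipschitzWith_one_iff_abs_sub_le {α : Type*} [PseudoMetricSpace α] {f : α → ℝ} :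
    LipschitzWith 1 f ↔ ∀ u v, |f u - f v| ≤ dist u v := by
  simp [lipschitzWith_iff_dist_le_mul, Real.dist_eq]

section PseudoMetricSpace

variable {α : Type*} [PseudoMetricSpace α] {f : α → ℝ} {A : Set α}

lemma sub_le_infDist_of_forall_le (hf : LipschitzWith 1 f) (hA : A.Nonempty) {c : ℝ}
    (hfA : ∀ a ∈ A, c ≤ f a) (v : α) : c - f v ≤ infDist v A := by
  refine (le_infDist hA).2 fun a ha => ?_
  have hdist := lipschitzWith_one_iff_abs_sub_le.1 hf a v
  rw [dist_comm] at hdist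
  linarith [hfA a ha, le_abs_self (f a - f v)]

variable [MeasurableSpace α] {μ : Measure α} [IsProbabilityMeasure μ]

lemma le_integral_infDist_of_forall_le (hf : LipschitzWith 1 f) (hfi : Integrable f μ)
    (hA : A.Nonempty) (hAi : Integrable (fun v => infDist v A) μ) {x : ℝ}
    (hfA : ∀ a ∈ A, x + ∫ v, f v ∂μ ≤ f a) : x ≤ ∫ v, infDist v A ∂μ :=
  calc x = ∫ v, (x + ∫ w, f w ∂μ) - f v ∂μ := by
        rw [integral_sub (integrable_const _) hfi, integral_const, probReal_univ, one_smul]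
        ring
    _ ≤ ∫ v, infDist v A ∂μ :=
        integral_mono ((integrable_const _).sub hfi) hAi (sub_le_infDist_of_forall_le hf hA hfA)

end PseudoMetricSpace

section Finite

variable {α : Type*} [PseudoMetricSpace α] [Finite α] [MeasurableSpace α]
  [MeasurableSingletonClass α] (μ : Measure α) [IsProbabilityMeasure μ]

lemma measure_superlevel_le_iSup_infDist {f : α → ℝ} (hf : LipschitzWith 1 f) (x : ℝ) :
    μ {u | f u - ∫ v, f v ∂μ ≥ x} ≤ ⨆ (A : Set α) (_ : A.Nonempty),
      μ {u | -infDist u A + ∫ v, infDist v A ∂μ ≥ x} := by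
  set A := {u | f u - ∫ v, f v ∂μ ≥ x}
  rcases A.eq_empty_or_nonempty with hA | hA
  · simp [hA]
  have hx : x ≤ ∫ v, infDist v A ∂μ :=
    le_integral_infDist_of_forall_le hf .of_finite hA .of_finite fun a (ha : _ ≥ x) => by
      linarith
  refine le_iSup₂_of_le A hA (measure_mono fun u hu => ?_)
  simpa [infDist_zero_of_mem hu] using hx

theorem iSup_measure_superlevel_lipschitzWith_eq_iSup_infDist (x : ℝ) :
    (⨆ (f : α → ℝ) (_ : LipschitzWith 1 f), μ {u | f u - ∫ v, f v ∂μ ≥ x}) =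
      ⨆ (A : Set α) (_ : A.Nonempty), μ {u | -infDist u A + ∫ v, infDist v A ∂μ ≥ x} := by
  refine le_antisymm (iSup₂_le fun f hf => measure_superlevel_le_iSup_infDist μ hf x)
    (iSup₂_le fun A _ => ?_)
  refine le_iSup₂_of_le (fun w => -infDist w A) (lipschitz_infDist_pt A).neg (le_of_eq ?_)
  simp only [integral_neg, sub_neg_eq_add]

end Finite

theorem stmt_8 (n : ℕ) (x : ℝ)
    (μ : @Measure (Hamming (fun _ : Fin n => Bool)) ⊤)
    (hμ : μ = ((Fintype.card (Hamming (fun _ : Fin n => Bool)) : ℝ≥0∞))⁻¹ •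
      @Measure.count (Hamming (fun _ : Fin n => Bool)) ⊤) :
    (⨆ (f : Hamming (fun _ : Fin n => Bool) → ℝ)
        (_ : ∀ u v, |f u - f v| ≤ dist u v),
        μ {u | f u - ∫ v, f v ∂μ ≥ x}) =
    ⨆ (A : Set (Hamming (fun _ : Fin n => Bool))) (_ : A.Nonempty),
        μ {u | -Metric.infDist u A + ∫ v, Metric.infDist v A ∂μ ≥ x} := by
  let : MeasurableSpace (Hamming (fun _ : Fin n => Bool)) := ⊤
  have : MeasurableSingletonClass (Hamming (fun _ : Fin n => Bool)) := ⟨fun _ => trivial⟩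
  subst hμ
  have := isProbabilityMeasure_inv_card_smul_count (α := Hamming (fun _ : Fin n => Bool))
  simp_rw [← lipschitzWith_one_iff_abs_sub_le]
  exact iSup_measure_superlevel_lipschitzWith_eq_iSup_infDist _ x
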